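/- arXiv:1410.8327 — 2 statements merged into one kernel-verified Lean document; each statement's English description precedes it below -/
import Mathlib

section
/- There exists a qubit state ρ with Bloch vector (r_x, r_y, r_z) satisfying r_x² + r_y² = 1/2 and r_z = −√2/2 (so r_z² = 1/2), such that for the incoherent Kraus operators K₁ = diag(1, 1/2) and K₂ with entries K₂(0,1) = √3/2 and zeros elsewhere (satisfying K₁†K₁ + K₂†K₂ = I), one has p₁·C_F(ρ₁) + p₂·C_F(ρ₂) > C_F(ρ), where p_i = Tr(K_i ρ K_i†) and ρ_i = K_i ρ K_i†/p_i. Concretely, p₁·C_F(ρ₁) = ((10−3√2)/16)·[1 − (√2/2)√(1 + √(1 − 32/(10−3√2)²))] ≈ 0.08273 while C_F(ρ) = 1 − √((1/2)(1 + √2/2)) ≈ 0.07612, and C_F(ρ₂) = 0. -/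
open Matrix Complex ComplexOrder

noncomputable def matSqrt {n : Type*} [Fintype n] [DecidableEq n]
    (A : Matrix n n ℂ) : Matrix n n ℂ :=
  open Classical in
  if h : A.PosSemidef then
    h.1.eigenvectorUnitary.1 * diagonal ((↑) ∘ (√·) ∘ h.1.eigenvalues) *
      (star h.1.eigenvectorUnitary : Matrix n n ℂ)
  else 0

noncomputable def fid {n : Type*} [Fintype n] [DecidableEq n]
    (ρ δ : Matrix n n ℂ) : ℝ :=
  ((matSqrt (matSqrt ρ * δ * matSqrt ρ)).trace).re ^ 2

noncomputable def traceNorm {n : Type*} [Fintype n] [DecidableEq n]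
    (A : Matrix n n ℂ) : ℝ :=
  ((matSqrt (Aᴴ * A)).trace).re

def IsDensity {n : Type*} [Fintype n] [DecidableEq n] (ρ : Matrix n n ℂ) : Prop :=
  ρ.PosSemidef ∧ ρ.trace = 1

noncomputable def qubit (rx ry rz : ℝ) : Matrix (Fin 2) (Fin 2) ℂ :=
  (1/2 : ℂ) • !![(1:ℂ) + rz, (rx : ℂ) - ry * I; (rx : ℂ) + ry * I, (1:ℂ) - rz]

/-- Closed form of the fidelity coherence of a qubit density matrix:
for ρ with Bloch vector (x,y,z) one has ρ₀₁ = (x − iy)/2, so x² + y² = 4|ρ₀₁|². -/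
noncomputable def CFq (ρ : Matrix (Fin 2) (Fin 2) ℂ) : ℝ :=
  1 - (Real.sqrt 2 / 2) * Real.sqrt (1 + Real.sqrt (1 - 4 * ‖ρ 0 1‖ ^ 2))

/- ## Auxiliary lemmas -/

lemma aux_s_lb : (1.414213:ℝ) < Real.sqrt 2 := by
  rw [show (1.414213:ℝ) = Real.sqrt (1.414213^2) from (Real.sqrt_sq (by norm_num)).symm]
  exact Real.sqrt_lt_sqrt (by positivity) (by norm_num)

lemma aux_s_ub : Real.sqrt 2 < 1.414214 := by
  rw [show (1.414214:ℝ) = Real.sqrt (1.414214^2) from (Real.sqrt_sq (by norm_num)).symm]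
  exact Real.sqrt_lt_sqrt (by norm_num) (by norm_num)

lemma aux_main_ineq : ((10 - 3 * Real.sqrt 2) / 16) *
    (1 - (Real.sqrt 2 / 2) *
      Real.sqrt (1 + Real.sqrt (1 - 32 / (10 - 3 * Real.sqrt 2) ^ 2))) >
    1 - Real.sqrt ((1/2) * (1 + Real.sqrt 2 / 2)) := by
  have hs2 : Real.sqrt 2 ^ 2 = 2 := Real.sq_sqrt (by norm_num)
  have hlb := aux_s_lb
  have hub := aux_s_ub
  set s := Real.sqrt 2 with hs
  have hsq : (10 - 3*s)^2 = 118 - 60*s := by nlinarith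
  have hpos : (0:ℝ) < 118 - 60*s := by nlinarith
  set a : ℝ := 1 - 32 / (10 - 3*s)^2 with ha
  have ha_lb : 0.0346076 < a := by
    rw [ha, hsq]
    rw [show (0.0346076:ℝ) = 1 - 0.9653924 by norm_num]
    have : 32 / (118 - 60*s) < 0.9653924 := by
      rw [div_lt_iff₀ hpos]; nlinarith
    linarith
  have ha_ub : a < 0.0346094 := by
    rw [ha, hsq]
    have : (0.9653906:ℝ) < 32 / (118 - 60*s) := by
      rw [lt_div_iff₀ hpos]; nlinarith
    linarith
  have hu_lb : (0.18603:ℝ) < Real.sqrt a := by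
    rw [show (0.18603:ℝ) = Real.sqrt (0.18603^2) from (Real.sqrt_sq (by norm_num)).symm]
    exact Real.sqrt_lt_sqrt (by positivity) (by nlinarith)
  have hu_ub : Real.sqrt a < 0.18604 := by
    rw [show (0.18604:ℝ) = Real.sqrt (0.18604^2) from (Real.sqrt_sq (by norm_num)).symm]
    exact Real.sqrt_lt_sqrt (by positivity) (by nlinarith)
  set u := Real.sqrt a with hu
  have hv_ub : Real.sqrt (1 + u) < 1.08906 := by
    rw [show (1.08906:ℝ) = Real.sqrt (1.08906^2) from (Real.sqrt_sq (by norm_num)).symm]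
    exact Real.sqrt_lt_sqrt (by positivity) (by nlinarith)
  have hv_lb : (0:ℝ) ≤ Real.sqrt (1 + u) := Real.sqrt_nonneg _
  set v := Real.sqrt (1 + u) with hv
  have hw_lb : (0.923879:ℝ) < Real.sqrt ((1/2) * (1 + s / 2)) := by
    rw [show (0.923879:ℝ) = Real.sqrt (0.923879^2) from (Real.sqrt_sq (by norm_num)).symm]
    exact Real.sqrt_lt_sqrt (by positivity) (by nlinarith)
  set w := Real.sqrt ((1/2) * (1 + s/2)) with hw
  have h1 : (s/2) * v < 0.770088 := by nlinarith
  have hp : (0.3598348:ℝ) < (10 - 3*s)/16 := by nlinarith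
  nlinarith

lemma aux_tr1 (rx rz : ℝ) :
    (((!![1, 0; 0, 1/2] : Matrix (Fin 2) (Fin 2) ℂ) * qubit rx 0 rz *
      (!![1, 0; 0, 1/2] : Matrix (Fin 2) (Fin 2) ℂ)ᴴ).trace).re = (5 + 3*rz)/8 := by
  simp [qubit, Matrix.trace_fin_two, Matrix.mul_apply, Matrix.vecMul, dotProduct,
    Fin.sum_univ_two, Matrix.conjTranspose_apply,
    Matrix.smul_apply, Complex.ext_iff, Complex.div_re, Complex.div_im, Complex.normSq,
    map_ofNat]
  ring

lemma aux_ent1 (rx rz : ℝ) :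
    ((!![1, 0; 0, 1/2] : Matrix (Fin 2) (Fin 2) ℂ) * qubit rx 0 rz *
      (!![1, 0; 0, 1/2] : Matrix (Fin 2) (Fin 2) ℂ)ᴴ) 0 1 = ((rx/4 : ℝ) : ℂ) := by
  simp [qubit, Matrix.mul_apply, Matrix.vecMul, dotProduct, Fin.sum_univ_two,
    Matrix.conjTranspose_apply, Matrix.smul_apply, Complex.ext_iff, Complex.div_re,
    Complex.div_im, Complex.normSq, map_ofNat]
  ring

lemma aux_ent2 (rx rz : ℝ) :
    ((!![0, (Real.sqrt 3 / 2 : ℂ); 0, 0] : Matrix (Fin 2) (Fin 2) ℂ) * qubit rx 0 rz *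
      (!![0, (Real.sqrt 3 / 2 : ℂ); 0, 0] : Matrix (Fin 2) (Fin 2) ℂ)ᴴ) 0 1 = 0 := by
  simp [qubit, Matrix.mul_apply, Matrix.vecMul, dotProduct, Fin.sum_univ_two,
    Matrix.conjTranspose_apply, Matrix.smul_apply]

lemma aux_entq (rx rz : ℝ) : (qubit rx 0 rz) 0 1 = ((rx/2 : ℝ) : ℂ) := by
  simp [qubit, Matrix.smul_apply, Complex.ext_iff]
  ring

lemma aux_kraus : (!![1, 0; 0, 1/2] : Matrix (Fin 2) (Fin 2) ℂ)ᴴ * !![1, 0; 0, 1/2]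
    + (!![0, (Real.sqrt 3 / 2 : ℂ); 0, 0])ᴴ * !![0, (Real.sqrt 3 / 2 : ℂ); 0, 0] = 1 := by
  have h3 : (Real.sqrt 3 : ℝ) * Real.sqrt 3 = 3 := Real.mul_self_sqrt (by norm_num)
  ext i j
  fin_cases i <;> fin_cases j <;>
    simp [Matrix.mul_apply, Fin.sum_univ_two, Matrix.conjTranspose_apply, Matrix.one_apply,
      Complex.ext_iff, map_ofNat, Complex.div_re, Complex.div_im, Complex.normSq] <;>
    norm_num <;> nlinarith

/-- Counterexample: the fidelity of coherence violates monotonicity on average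
under incoherent subselection (condition C2b). -/
theorem fidelity_coherence_violates_C2b :
    ∃ rx ry rz : ℝ, rx ^ 2 + ry ^ 2 = 1 / 2 ∧ rz = -(Real.sqrt 2 / 2) ∧
      rx ^ 2 + ry ^ 2 + rz ^ 2 ≤ 1 ∧
      ∀ K₁ K₂ : Matrix (Fin 2) (Fin 2) ℂ,
        K₁ = !![1, 0; 0, 1/2] → K₂ = !![0, (Real.sqrt 3 / 2 : ℂ); 0, 0] →
        K₁ᴴ * K₁ + K₂ᴴ * K₂ = 1 ∧
        ∀ p₁ p₂ : ℝ, p₁ = ((K₁ * qubit rx ry rz * K₁ᴴ).trace).re →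
          p₂ = ((K₂ * qubit rx ry rz * K₂ᴴ).trace).re →
          ∀ ρ₁ ρ₂ : Matrix (Fin 2) (Fin 2) ℂ,
            ρ₁ = ((p₁ : ℂ))⁻¹ • (K₁ * qubit rx ry rz * K₁ᴴ) →
            ρ₂ = ((p₂ : ℂ))⁻¹ • (K₂ * qubit rx ry rz * K₂ᴴ) →
            p₁ * CFq ρ₁ + p₂ * CFq ρ₂ > CFq (qubit rx ry rz) ∧
            p₁ * CFq ρ₁ = ((10 - 3 * Real.sqrt 2) / 16) *
              (1 - (Real.sqrt 2 / 2) *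
                Real.sqrt (1 + Real.sqrt (1 - 32 / (10 - 3 * Real.sqrt 2) ^ 2))) ∧
            CFq (qubit rx ry rz) = 1 - Real.sqrt ((1/2) * (1 + Real.sqrt 2 / 2)) ∧
            CFq ρ₂ = 0 := by
  have hs2 : Real.sqrt 2 ^ 2 = 2 := Real.sq_sqrt (by norm_num)
  have hsnn : (0:ℝ) ≤ Real.sqrt 2 := Real.sqrt_nonneg 2
  refine ⟨Real.sqrt 2 / 2, 0, -(Real.sqrt 2 / 2), by nlinarith, rfl, by nlinarith, ?_⟩
  intro K₁ K₂ hK₁ hK₂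
  subst hK₁ hK₂
  refine ⟨aux_kraus, ?_⟩
  intro p₁ p₂ hp₁ hp₂ ρ₁ ρ₂ hρ₁ hρ₂
  set s := Real.sqrt 2 with hs
  have hub := aux_s_ub
  have hlb := aux_s_lb
  -- value of p₁
  have hp1v : p₁ = (10 - 3*s)/16 := by rw [hp₁, aux_tr1]; ring
  have hp1pos : 0 < p₁ := by rw [hp1v]; nlinarith
  -- entry of ρ₁
  have hρ₁01 : ρ₁ 0 1 = (((s/2)/(4*p₁) : ℝ) : ℂ) := by
    rw [hρ₁, Matrix.smul_apply, aux_ent1]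
    have hp1ne : (p₁ : ℂ) ≠ 0 := by
      exact_mod_cast Complex.ofReal_ne_zero.mpr (ne_of_gt hp1pos)
    push_cast [smul_eq_mul]
    ring
  have habs1 : ‖ρ₁ 0 1‖ = (s/2)/(4*p₁) := by
    rw [hρ₁01, Complex.norm_real, Real.norm_of_nonneg (by positivity)]
  -- the key algebraic identity for the argument of the sqrt
  have harg1 : 1 - 4 * ‖ρ₁ 0 1‖ ^ 2 = 1 - 32 / (10 - 3*s)^2 := by
    rw [habs1, hp1v]
    have h10 : (10 - 3*s) ≠ 0 := by nlinarith
    field_simp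
    ring_nf
    rw [hs2]; ring
  -- value of p₁ * CFq ρ₁
  have h1 : p₁ * CFq ρ₁ = ((10 - 3 * s) / 16) *
      (1 - (s / 2) * Real.sqrt (1 + Real.sqrt (1 - 32 / (10 - 3 * s) ^ 2))) := by
    rw [CFq, harg1, hp1v]
  -- CFq ρ₂ = 0
  have hρ₂01 : ρ₂ 0 1 = 0 := by
    rw [hρ₂, Matrix.smul_apply, aux_ent2, smul_zero]
  have h2 : CFq ρ₂ = 0 := by
    rw [CFq, hρ₂01]
    simp only [norm_zero, ne_eq, OfNat.ofNat_ne_zero, not_false_eq_true, zero_pow, mul_zero,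
      sub_zero, Real.sqrt_one]
    rw [show (1:ℝ) + 1 = 2 by norm_num]
    nlinarith [hs2]
  -- CFq of the original state
  have hCq01 : (qubit (s/2) 0 (-(s/2))) 0 1 = ((s/4 : ℝ) : ℂ) := by
    rw [aux_entq]; push_cast; ring_nf
  have hargq : 1 - 4 * ‖(qubit (s/2) 0 (-(s/2))) 0 1‖ ^ 2 = 1/2 := by
    rw [hCq01, Complex.norm_real, Real.norm_of_nonneg (by positivity)]
    nlinarith [hs2]
  have hhalf : Real.sqrt (1/2) = s/2 := by
    rw [show (1/2:ℝ) = (s/2)^2 by nlinarith, Real.sqrt_sq (by positivity)]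
  have hC : CFq (qubit (s/2) 0 (-(s/2))) = 1 - Real.sqrt ((1/2) * (1 + s / 2)) := by
    rw [CFq, hargq, hhalf, Real.sqrt_mul (by norm_num : (0:ℝ) ≤ 1/2), hhalf]
  refine ⟨?_, h1, hC, h2⟩
  rw [h2, mul_zero, add_zero, h1, hC]
  exact aux_main_ineq
end

section
/- For a qubit state ρ with Bloch vector (r_x, r_y, r_z), the trace-norm coherence C_tr(ρ) = min over incoherent δ of ‖ρ − δ‖_tr equals √(r_x² + r_y²), and the minimum is achieved at the diagonal part δ = ρ_diag (Bloch vector (0,0,r_z)). -/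
open Matrix Complex ComplexOrder

lemma matSqrt_eq {n : Type*} [Fintype n] [DecidableEq n] {A B : Matrix n n ℂ}
    (hB : B.PosSemidef) (hAB : B ^ 2 = A) : matSqrt A = B := by
  have hA : A.PosSemidef := hAB ▸ hB.pow 2
  rw [matSqrt, dif_pos hA]
  open scoped MatrixOrder in
  have h1 : hA.1.cfc Real.sqrt = B := by
    rw [← hA.1.cfc_eq, ← cfcₙ_eq_cfc, ← CFC.sqrt_eq_real_sqrt A hA.nonneg]
    exact CFC.sqrt_unique (by rw [← hAB, sq]) hB.nonneg
  rw [← h1, IsHermitian.cfc, Unitary.conjStarAlgAut_apply]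
  rfl

lemma psd_smul_one (r : ℝ) (hr : 0 ≤ r) :
    ((r : ℂ) • (1 : Matrix (Fin 2) (Fin 2) ℂ)).PosSemidef := by
  have : (r : ℂ) • (1 : Matrix (Fin 2) (Fin 2) ℂ) = diagonal (fun _ => (r:ℂ)) := by
    ext i j
    by_cases hij : i = j <;> simp [hij, Matrix.one_apply, Matrix.diagonal_apply]
  rw [this]
  exact PosSemidef.diagonal fun i => by
    simp [Complex.nonneg_iff, hr]

lemma tn_key (a b c : ℝ) :
    traceNorm ((1/2 : ℂ) • !![(c:ℂ), (a:ℂ) - b*I; (a:ℂ) + b*I, -(c:ℂ)]) =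
      Real.sqrt (a^2 + b^2 + c^2) := by
  set D : Matrix (Fin 2) (Fin 2) ℂ :=
    (1/2 : ℂ) • !![(c:ℂ), (a:ℂ) - b*I; (a:ℂ) + b*I, -(c:ℂ)] with hD
  have hS : 0 ≤ a^2 + b^2 + c^2 := by positivity
  have hDD : Dᴴ * D = (((a^2+b^2+c^2)/4 : ℝ) : ℂ) • (1 : Matrix (Fin 2) (Fin 2) ℂ) := by
    ext i j
    fin_cases i <;> fin_cases j <;>
      simp [hD, Matrix.mul_apply, Fin.sum_univ_two, Matrix.one_apply, Complex.ext_iff, pow_two] <;>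
      ring_nf <;> simp
  have hsq : ((((Real.sqrt (a^2+b^2+c^2))/2 : ℝ) : ℂ) • (1 : Matrix (Fin 2) (Fin 2) ℂ)) ^ 2
      = (((a^2+b^2+c^2)/4 : ℝ) : ℂ) • (1 : Matrix (Fin 2) (Fin 2) ℂ) := by
    rw [smul_pow, one_pow]
    congr 1
    rw [← Complex.ofReal_pow, div_pow, Real.sq_sqrt hS]
    norm_num
  have hmat : matSqrt (Dᴴ * D)
      = (((Real.sqrt (a^2+b^2+c^2))/2 : ℝ) : ℂ) • (1 : Matrix (Fin 2) (Fin 2) ℂ) := by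
    rw [hDD]
    exact matSqrt_eq (psd_smul_one _ (by positivity)) hsq
  rw [traceNorm, hmat]
  simp [Matrix.trace, Matrix.diag, Matrix.one_apply, Fin.sum_univ_two]
  ring

lemma qubit_sub (rx ry rz s : ℝ) :
    qubit rx ry rz - qubit 0 0 s =
      (1/2 : ℂ) • !![((rz - s : ℝ) : ℂ), (rx:ℂ) - ry*I; (rx:ℂ) + ry*I, -((rz - s : ℝ):ℂ)] := by
  ext i j
  fin_cases i <;> fin_cases j <;> simp [qubit] <;> push_cast <;> ring

lemma tn_qubit (rx ry rz s : ℝ) :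
    traceNorm (qubit rx ry rz - qubit 0 0 s) = Real.sqrt (rx^2 + ry^2 + (rz - s)^2) := by
  rw [qubit_sub, tn_key]

lemma qubit_density (rz : ℝ) (h1 : -1 ≤ rz) (h2 : rz ≤ 1) :
    (qubit 0 0 rz).PosSemidef ∧ (qubit 0 0 rz).trace = 1 := by
  constructor
  · have : qubit 0 0 rz = diagonal ![(((1+rz)/2 : ℝ) : ℂ), (((1-rz)/2 : ℝ) : ℂ)] := by
      ext i j
      fin_cases i <;> fin_cases j <;>
        simp [qubit, Matrix.diagonal_apply] <;> push_cast <;> ring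
    rw [this]
    refine PosSemidef.diagonal fun i => ?_
    fin_cases i <;> simp [Complex.nonneg_iff] <;> linarith
  · simp [Matrix.trace, Matrix.diag, Fin.sum_univ_two, qubit]
    ring

lemma diag_density_eq (δ : Matrix (Fin 2) (Fin 2) ℂ) (hpsd : δ.PosSemidef)
    (htr : δ.trace = 1) (hdiag : δ.IsDiag) :
    δ = qubit 0 0 (2 * (δ 0 0).re - 1) := by
  have him : (δ 0 0).im = 0 := by
    have h' : (δ 0 0).im = -(δ 0 0).im := by
      have := congrFun (congrFun hpsd.1 0) 0
      simpa [Matrix.conjTranspose_apply, Complex.ext_iff] using this.symm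
    linarith
  have htr2 : δ 0 0 + δ 1 1 = 1 := by
    simpa [Matrix.trace, Matrix.diag, Fin.sum_univ_two] using htr
  ext i j
  fin_cases i <;> fin_cases j
  · simp [qubit, Complex.ext_iff, him]
  · simpa [qubit] using hdiag (show (0 : Fin 2) ≠ 1 by decide)
  · simpa [qubit] using hdiag (show (1 : Fin 2) ≠ 0 by decide)
  · have h11 : δ 1 1 = 1 - δ 0 0 := by linear_combination htr2
    show δ 1 1 = qubit 0 0 (2 * (δ 0 0).re - 1) 1 1
    rw [h11]
    simp [qubit, Complex.ext_iff, him]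
    ring

/-- The trace-norm coherence of a qubit with Bloch vector (rx, ry, rz) equals
√(rx² + ry²), with the minimum achieved at the diagonal part ρ_diag,
of Bloch vector (0, 0, rz). -/
theorem traceNorm_coherence_qubit (rx ry rz : ℝ) (h : rx ^ 2 + ry ^ 2 + rz ^ 2 ≤ 1) :
    IsLeast {t : ℝ | ∃ δ : Matrix (Fin 2) (Fin 2) ℂ,
        IsDensity δ ∧ δ.IsDiag ∧ t = traceNorm (qubit rx ry rz - δ)}
      (Real.sqrt (rx ^ 2 + ry ^ 2)) ∧
    traceNorm (qubit rx ry rz - qubit 0 0 rz) = Real.sqrt (rx ^ 2 + ry ^ 2) := by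
  have hach : traceNorm (qubit rx ry rz - qubit 0 0 rz) = Real.sqrt (rx ^ 2 + ry ^ 2) := by
    rw [tn_qubit]; ring_nf
  have hrz : rz^2 ≤ 1 := by nlinarith [sq_nonneg rx, sq_nonneg ry]
  have h1 : -1 ≤ rz := by nlinarith
  have h2 : rz ≤ 1 := by nlinarith
  refine ⟨⟨⟨qubit 0 0 rz, ⟨(qubit_density rz h1 h2).1, (qubit_density rz h1 h2).2⟩, ?_, hach.symm⟩, ?_⟩, hach⟩
  · intro i j hij
    fin_cases i <;> fin_cases j <;> simp_all [qubit]
  · rintro t ⟨δ, ⟨hpsd, htr⟩, hdiag, rfl⟩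
    rw [diag_density_eq δ hpsd htr hdiag, tn_qubit]
    exact Real.sqrt_le_sqrt (by nlinarith [sq_nonneg (rz - (2 * (δ 0 0).re - 1))])
end
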